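/- Let v be an odd positive divisor of n ≥ 3, T ⊆ {x, x², ..., x^{v−1}}, and X = T·⟨x^v⟩ ⊆ C_n such that X ∪ X^{(−1)} = C_n \ ⟨x^v⟩ (a disjoint union, i.e., X and X^{(−1)} partition the complement of ⟨x^v⟩). Then Dih(n,X,X) is a directed strongly regular graph with parameters (2n, n−l, (n−l)/2, (n−l)/2 − l, (n−l)/2), where l = n/v. -/

import Mathlib

open scoped Classical

noncomputable def adjMat {V : Type*} [Fintype V] (r : V → V → Prop) : Matrix V V ℤ :=
  Matrix.of fun i j => if r i j then 1 else 0

noncomputable def allOnes (V : Type*) [Fintype V] : Matrix V V ℤ :=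
  Matrix.of fun _ _ => 1

/-- `r` is (the adjacency relation of) a directed strongly regular graph with
parameters `(n, k, μ, lam, t)`. -/
def IsDSRG {V : Type*} [Fintype V] [DecidableEq V] (r : V → V → Prop)
    (n k μ lam t : ℤ) : Prop :=
  (∀ i, ¬ r i i) ∧ ((Fintype.card V : ℤ) = n) ∧
  allOnes V * adjMat r = k • allOnes V ∧
  adjMat r * allOnes V = k • allOnes V ∧
  adjMat r * adjMat r =
    t • (1 : Matrix V V ℤ) + lam • adjMat r + μ • (allOnes V - 1 - adjMat r)

/-- The Cayley digraph relation of `S ⊆ G`: `g → h` iff `g⁻¹ * h ∈ S`. -/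
def cayleyRel {G : Type*} [Group G] (S : Finset G) : G → G → Prop :=
  fun g h => g⁻¹ * h ∈ S

/-- The connection set `X ∪ Yτ ⊆ D_n`, with `C_n` realized additively as `ZMod n`,
`x^a` as `DihedralGroup.r a` and `τ = DihedralGroup.sr 0`. -/
noncomputable def dihSet (n : ℕ) (X Y : Finset (ZMod n)) : Finset (DihedralGroup n) :=
  X.image DihedralGroup.r ∪ Y.image (fun a => DihedralGroup.r a * DihedralGroup.sr 0)

/-- `X̄`, the sum of the elements of `X` in the group ring `ℤ[C_n]`. -/
noncomputable def fbar {n : ℕ} (X : Finset (ZMod n)) : AddMonoidAlgebra ℤ (ZMod n) :=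
  ∑ a ∈ X, AddMonoidAlgebra.single a 1

/-- `X^{(−1)}‾`, the sum of the inverses of the elements of `X` in `ℤ[C_n]`. -/
noncomputable def fbarInv {n : ℕ} (X : Finset (ZMod n)) : AddMonoidAlgebra ℤ (ZMod n) :=
  ∑ a ∈ X, AddMonoidAlgebra.single (-a) 1

/-- `C̄_n`, the sum of all elements of `C_n` in `ℤ[C_n]`. -/
noncomputable def cbar (n : ℕ) [NeZero n] : AddMonoidAlgebra ℤ (ZMod n) :=
  ∑ a : ZMod n, AddMonoidAlgebra.single a 1

/-! In a Cayley digraph `Cay(G, S)` the number of 2-paths from `g` to `h` is the number of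
`s ∈ S` with `s⁻¹ g⁻¹ h ∈ S`, so `Cay(G, S)` is a DSRG as soon as this count depends only on
whether `z = g⁻¹ h` is `1`, lies in `S`, or neither. For `S = X ∪ Xτ ⊆ D_n` the count at
`x^c` and at `x^c τ` is the number of `a ∈ X` with `c - a ∈ X ∪ X^{(−1)} = C_n \ ⟨x^v⟩`. As `X` is a union of cosets of `⟨x^v⟩`, exactly `l` of
the `a ∈ X` fail this when `c ∈ X` and none otherwise, so the count is `|X| - l·[z ∈ S]`,
with `2|X| = n - l`. -/

open Finset

section Cayley

variable {G : Type*} [Group G] [Fintype G] [DecidableEq G] (S : Finset G)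

theorem adjMat_cayleyRel_apply (g h : G) :
    adjMat (cayleyRel S) g h = if g⁻¹ * h ∈ S then 1 else 0 := by
  rw [adjMat, Matrix.of_apply]
  exact if_congr Iff.rfl rfl rfl

theorem allOnes_mul_adjMat_cayleyRel : allOnes G * adjMat (cayleyRel S) = #S • allOnes G := by
  ext g h
  simp only [Matrix.mul_apply, allOnes, Matrix.of_apply, one_mul, adjMat_cayleyRel_apply,
    Matrix.smul_apply]
  rw [← Equiv.sum_comp ((Equiv.inv G).trans (Equiv.mulLeft h))]
  simp

theorem adjMat_cayleyRel_mul_allOnes : adjMat (cayleyRel S) * allOnes G = #S • allOnes G := by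
  ext g h
  simp only [Matrix.mul_apply, allOnes, Matrix.of_apply, mul_one, adjMat_cayleyRel_apply,
    Matrix.smul_apply]
  rw [← Equiv.sum_comp (Equiv.mulLeft g)]
  simp

theorem adjMat_cayleyRel_mul_self_apply (g h : G) :
    (adjMat (cayleyRel S) * adjMat (cayleyRel S)) g h = #{s ∈ S | s⁻¹ * (g⁻¹ * h) ∈ S} := by
  simp only [Matrix.mul_apply, adjMat_cayleyRel_apply]
  rw [← Equiv.sum_comp (Equiv.mulLeft g)]
  simp only [Equiv.coe_mulLeft, inv_mul_cancel_left, mul_inv_rev, mul_assoc, ite_mul, one_mul,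
    zero_mul, sum_ite_mem, univ_inter, natCast_card_filter]

theorem isDSRG_cayleyRel_of_card_filter (h1 : (1 : G) ∉ S) (μ lam t : ℤ)
    (hpaths : ∀ z, (#{s ∈ S | s⁻¹ * z ∈ S} : ℤ) = if z ∈ S then lam else if z = 1 then t else μ) :
    IsDSRG (cayleyRel S) (Fintype.card G) #S μ lam t := by
  refine ⟨fun g hg => h1 ?_, rfl, allOnes_mul_adjMat_cayleyRel S,
    adjMat_cayleyRel_mul_allOnes S, ?_⟩
  · simpa [cayleyRel] using hg
  ext g h
  have h_eq : g = h ↔ g⁻¹ * h = 1 := inv_mul_eq_one.symm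
  simp only [adjMat_cayleyRel_mul_self_apply, hpaths, Matrix.add_apply, Matrix.smul_apply,
    Matrix.sub_apply, Matrix.one_apply, allOnes, adjMat_cayleyRel_apply, Matrix.of_apply,
    smul_eq_mul, h_eq]
  split_ifs <;> simp_all

end Cayley

section Dihedral

open DihedralGroup

variable {n : ℕ} (X Y : Finset (ZMod n))

theorem dihSet_eq_union : dihSet n X Y = X.image r ∪ Y.image (fun a => sr (-a)) := by
  simp [dihSet, r_mul_sr]

theorem mem_dihSet_r {a : ZMod n} : r a ∈ dihSet n X Y ↔ a ∈ X := by
  simp [dihSet_eq_union]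

theorem mem_dihSet_sr {b : ZMod n} : sr b ∈ dihSet n X Y ↔ -b ∈ Y := by
  simp [dihSet_eq_union, neg_eq_iff_eq_neg]

theorem card_filter_dihSet (P : DihedralGroup n → Prop) [DecidablePred P] :
    #{s ∈ dihSet n X Y | P s} = #{a ∈ X | P (r a)} + #{a ∈ Y | P (sr (-a))} := by
  have hdisj : Disjoint (X.image r) (Y.image fun a => sr (-a)) := by
    simp [Finset.disjoint_left]
  rw [dihSet_eq_union, filter_union, card_union_of_disjoint (hdisj.mono (filter_subset _ _)
    (filter_subset _ _)), filter_image, filter_image, card_image_of_injective _ fun _ _ => r.inj,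
    card_image_of_injective _ fun _ _ h => neg_injective (sr.inj h)]

theorem card_dihSet : #(dihSet n X Y) = #X + #Y := by
  simpa using card_filter_dihSet X Y fun _ => True

theorem card_filter_dihSet_inv_mul_r (c : ZMod n) :
    #{s ∈ dihSet n X X | s⁻¹ * r c ∈ dihSet n X X} =
      #{a ∈ X | c - a ∈ X} + #{a ∈ X | a - c ∈ X} := by
  simp [card_filter_dihSet, mem_dihSet_r, mem_dihSet_sr, neg_add_eq_sub]

theorem card_filter_dihSet_inv_mul_sr (c : ZMod n) :
    #{s ∈ dihSet n X X | s⁻¹ * sr c ∈ dihSet n X X} =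
      #{a ∈ X | -c - a ∈ X} + #{a ∈ X | a - -c ∈ X} := by
  rw [card_filter_dihSet]
  congr 2 <;> ext a <;> simp only [inv_r, inv_sr, r_mul_sr, sr_mul_sr, mem_dihSet_r,
    mem_dihSet_sr] <;> ring_nf

end Dihedral

section Periodic

variable {G : Type*} [AddCommGroup G] [DecidableEq G] {X H : Finset G}

theorem card_filter_sub_mem_of_add_mem (hper : ∀ a ∈ X, ∀ h ∈ H, a + h ∈ X)
    (hneg : ∀ h ∈ H, -h ∈ H) (c : G) :
    #{a ∈ X | c - a ∈ H} = if c ∈ X then #H else 0 := by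
  split_ifs with hc
  · have hcoset : {a ∈ X | c - a ∈ H} = H.image (c - ·) := by
      ext a
      simp only [mem_filter, mem_image]
      constructor
      · rintro ⟨-, ha⟩
        exact ⟨c - a, ha, sub_sub_cancel c a⟩
      · rintro ⟨h, hh, rfl⟩
        exact ⟨by simpa [sub_eq_add_neg] using hper c hc (-h) (hneg h hh), by simpa using hh⟩
    rw [hcoset, card_image_of_injective _ sub_right_injective]
  · rw [card_eq_zero, filter_eq_empty_iff]
    intro a ha hca
    exact hc (by simpa using hper a ha _ hca)

theorem card_filter_sub_mem_add_card_filter_sub_mem [Fintype G]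
    (hper : ∀ a ∈ X, ∀ h ∈ H, a + h ∈ X) (hneg : ∀ h ∈ H, -h ∈ H)
    (hdisj : Disjoint X (X.image fun a => -a))
    (hcover : X ∪ X.image (fun a => -a) = univ \ H) (c : G) :
    #{a ∈ X | c - a ∈ X} + #{a ∈ X | a - c ∈ X} + (if c ∈ X then #H else 0) = #X := by
  have hmem_neg : ∀ g, g ∈ X.image (fun a => -a) ↔ -g ∈ X := fun g => by
    simp [neg_eq_iff_eq_neg]
  have hsplit : ∀ g, g ∈ X ∨ g ∈ X.image (fun a => -a) ↔ g ∉ H := fun g => by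
    rw [← mem_union, hcover, mem_sdiff, and_iff_right (mem_univ g)]
  have hexcl : Disjoint {a ∈ X | c - a ∈ X} {a ∈ X | a - c ∈ X} := by
    refine disjoint_filter.2 fun a _ hX hX' => disjoint_left.1 hdisj hX ?_
    rwa [hmem_neg, neg_sub]
  have hunion : {a ∈ X | c - a ∈ X} ∪ {a ∈ X | a - c ∈ X} = {a ∈ X | ¬ c - a ∈ H} := by
    rw [← filter_or]
    exact filter_congr fun a _ => by rw [← neg_sub c a, ← hmem_neg, hsplit]
  rw [← card_union_of_disjoint hexcl, hunion, ← card_filter_sub_mem_of_add_mem hper hneg c,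
    add_comm, card_filter_add_card_filter_not]

theorem card_add_card_add_card_eq_card [Fintype G] (hdisj : Disjoint X (X.image fun a => -a))
    (hcover : X ∪ X.image (fun a => -a) = univ \ H) : #X + #X + #H = Fintype.card G := by
  have hunion := card_union_of_disjoint hdisj
  rw [hcover, card_univ_sdiff, card_image_of_injective X neg_injective] at hunion
  have := card_le_univ H
  omega

end Periodic

section Multiples

/-- The subgroup `⟨x^v⟩` of `C_n`, when `v ∣ n`. -/
noncomputable def zmodMultiples (n v : ℕ) : Finset (ZMod n) :=
  (range (n / v)).image fun j : ℕ => ((j * v : ℕ) : ZMod n)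

variable {n v : ℕ}

theorem natCast_mul_mem_zmodMultiples [NeZero n] (hv : v ∣ n) (hv0 : 0 < v) (j : ℕ) :
    ((j * v : ℕ) : ZMod n) ∈ zmodMultiples n v := by
  have hl : 0 < n / v := Nat.div_pos (Nat.le_of_dvd (Nat.pos_of_neZero n) hv) hv0
  refine mem_image.2 ⟨j % (n / v), mem_range.2 (Nat.mod_lt _ hl), ?_⟩
  rw [← Nat.mul_mod_mul_right, Nat.div_mul_cancel hv, ZMod.natCast_mod]

theorem zero_mem_zmodMultiples [NeZero n] (hv : v ∣ n) (hv0 : 0 < v) :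
    (0 : ZMod n) ∈ zmodMultiples n v := by
  simpa using natCast_mul_mem_zmodMultiples hv hv0 0

theorem neg_mem_zmodMultiples [NeZero n] (hv : v ∣ n) (hv0 : 0 < v) {h : ZMod n}
    (hh : h ∈ zmodMultiples n v) : -h ∈ zmodMultiples n v := by
  obtain ⟨j, hj, rfl⟩ := mem_image.1 hh
  have hsum : (((n / v - j) * v : ℕ) : ZMod n) + ((j * v : ℕ) : ZMod n) = 0 := by
    rw [← Nat.cast_add, ← add_mul, Nat.sub_add_cancel (mem_range.1 hj).le,
      Nat.div_mul_cancel hv, ZMod.natCast_self]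
  rw [← eq_neg_of_add_eq_zero_left hsum]
  exact natCast_mul_mem_zmodMultiples hv hv0 _

theorem card_zmodMultiples (hv : v ∣ n) (hv0 : 0 < v) : #(zmodMultiples n v) = n / v := by
  have hlt : ∀ j < n / v, j * v < n := fun j hj => by
    simpa [mul_comm] using (Nat.lt_div_iff_mul_lt' hv j).1 hj
  refine (card_image_of_injOn fun i hi j hj hij => ?_).trans (card_range _)
  simp only [coe_range, Set.mem_Iio] at hi hj
  have hval := congrArg ZMod.val hij
  rw [ZMod.val_cast_of_lt (hlt i hi), ZMod.val_cast_of_lt (hlt j hj)] at hval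
  exact Nat.eq_of_mul_eq_mul_right hv0 hval

theorem add_mem_image_of_mem_zmodMultiples [NeZero n] (hv : v ∣ n) (hv0 : 0 < v) (T : Finset ℕ)
    {a h : ZMod n}
    (ha : a ∈ (T ×ˢ range (n / v)).image fun p : ℕ × ℕ => ((p.1 + p.2 * v : ℕ) : ZMod n))
    (hh : h ∈ zmodMultiples n v) :
    a + h ∈ (T ×ˢ range (n / v)).image fun p : ℕ × ℕ => ((p.1 + p.2 * v : ℕ) : ZMod n) := by
  obtain ⟨⟨t, j⟩, htj, rfl⟩ := mem_image.1 ha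
  obtain ⟨j', -, rfl⟩ := mem_image.1 hh
  obtain ⟨k, hk, hkv⟩ := mem_image.1 (natCast_mul_mem_zmodMultiples hv hv0 (j + j'))
  refine mem_image.2 ⟨(t, k), mem_product.2 ⟨(mem_product.1 htj).1, hk⟩, ?_⟩
  push_cast at hkv ⊢
  rw [hkv]
  ring

end Multiples

theorem construction_odd_general (n v : ℕ) [NeZero n] (hv : v ∣ n) (hvodd : Odd v)
    (T : Finset ℕ)
    (X : Finset (ZMod n))
    (hX : X = (T ×ˢ Finset.range (n / v)).image
      (fun p : ℕ × ℕ => ((p.1 + p.2 * v : ℕ) : ZMod n)))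
    (hdisj : Disjoint X (X.image (fun a => -a)))
    (hcover : X ∪ X.image (fun a => -a) =
      Finset.univ \ ((Finset.range (n / v)).image (fun j : ℕ => ((j * v : ℕ) : ZMod n)))) :
    IsDSRG (cayleyRel (dihSet n X X)) (2 * (n : ℤ))
      ((n : ℤ) - (n / v : ℕ))
      (((n : ℤ) - (n / v : ℕ)) / 2)
      (((n : ℤ) - (n / v : ℕ)) / 2 - (n / v : ℕ))
      (((n : ℤ) - (n / v : ℕ)) / 2) := by
  have hv0 : 0 < v := hvodd.pos
  change _ = univ \ zmodMultiples n v at hcover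
  have hper : ∀ a ∈ X, ∀ h ∈ zmodMultiples n v, a + h ∈ X := fun a ha h hh => by
    subst hX; exact add_mem_image_of_mem_zmodMultiples hv hv0 T ha hh
  have hcount := card_filter_sub_mem_add_card_filter_sub_mem hper
    (fun _ => neg_mem_zmodMultiples hv hv0) hdisj hcover
  rw [card_zmodMultiples hv hv0] at hcount
  have hcardX := card_add_card_add_card_eq_card hdisj hcover
  rw [card_zmodMultiples hv hv0, ZMod.card] at hcardX
  have h0X : (0 : ZMod n) ∉ X := fun h0 =>
    (mem_sdiff.1 (hcover ▸ mem_union_left _ h0)).2 (zero_mem_zmodMultiples hv hv0)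
  have hpaths : ∀ z, (#{s ∈ dihSet n X X | s⁻¹ * z ∈ dihSet n X X} : ℤ) =
      if z ∈ dihSet n X X then (#X : ℤ) - (n / v : ℕ) else if z = 1 then (#X : ℤ) else #X := by
    intro z
    rcases z with c | c
    · have hc := hcount c
      simp only [card_filter_dihSet_inv_mul_r, mem_dihSet_r]
      split_ifs at hc ⊢ <;> omega
    · have hc := hcount (-c)
      simp only [card_filter_dihSet_inv_mul_sr, mem_dihSet_sr]
      split_ifs at hc ⊢ <;> omega
  have h1 : (1 : DihedralGroup n) ∉ dihSet n X X := by
    rwa [DihedralGroup.one_def, mem_dihSet_r]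
  have hdsrg := isDSRG_cayleyRel_of_card_filter _ h1 _ _ _ hpaths
  rw [DihedralGroup.card, card_dihSet] at hdsrg
  convert hdsrg using 1 <;> push_cast <;> omega

/-- Construction. Let `v` be an odd positive divisor of `n ≥ 3`,
`T ⊆ {x,…,x^{v−1}}` and `X = T·⟨x^v⟩` such that `X` and `X^{(−1)}` partition
`C_n \ ⟨x^v⟩`. Then `Dih(n,X,X)` is a DSRG with parameters
`(2n, n−l, (n−l)/2, (n−l)/2 − l, (n−l)/2)` where `l = n/v`. -/
theorem construction_odd (n v : ℕ) [NeZero n] (hn : 3 ≤ n) (hv : v ∣ n) (hvodd : Odd v)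
    (T : Finset ℕ) (hT : ∀ a ∈ T, 1 ≤ a ∧ a < v)
    (X : Finset (ZMod n))
    (hX : X = (T ×ˢ Finset.range (n / v)).image
      (fun p : ℕ × ℕ => ((p.1 + p.2 * v : ℕ) : ZMod n)))
    (hdisj : Disjoint X (X.image (fun a => -a)))
    (hcover : X ∪ X.image (fun a => -a) =
      Finset.univ \ ((Finset.range (n / v)).image (fun j : ℕ => ((j * v : ℕ) : ZMod n)))) :
    IsDSRG (cayleyRel (dihSet n X X)) (2 * (n : ℤ))
      ((n : ℤ) - (n / v : ℕ))
      (((n : ℤ) - (n / v : ℕ)) / 2)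
      (((n : ℤ) - (n / v : ℕ)) / 2 - (n / v : ℕ))
      (((n : ℤ) - (n / v : ℕ)) / 2) :=
  construction_odd_general n v hv hvodd T X hX hdisj hcover
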